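/- Let A, B, C be positive real numbers, and define v₁ = −(B − A)/(A + B), v₂ = (B − C)/(B + C), v₃ = (A − C)/(A + C). Then v₃ = (v₁ + v₂)/(1 + v₁v₂). -/

import Mathlib

/-!
Writing `w x y = (x - y) / (x + y)`, both `w x y + w y z` and `1 + w x y * w y z` carry the factor
`2 y / ((x + y) (y + z))`, leaving `x - z` and `x + z`; so `w` obeys the relativistic addition law.
-/

/-- `x` and `y` are the squared scale factors `a²(t)` at emission and reception. -/
noncomputable def spectroscopicVelocity (x y : ℝ) : ℝ := (x - y) / (x + y)

namespace spectroscopicVelocity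

theorem swap (x y : ℝ) : spectroscopicVelocity y x = -spectroscopicVelocity x y := by
  rw [spectroscopicVelocity, spectroscopicVelocity, ← neg_div, neg_sub, add_comm]

theorem add {x y z : ℝ} (hy : y ≠ 0) (hxy : x + y ≠ 0) (hyz : y + z ≠ 0) :
    (spectroscopicVelocity x y + spectroscopicVelocity y z) /
        (1 + spectroscopicVelocity x y * spectroscopicVelocity y z) =
      spectroscopicVelocity x z := by
  have hsum : spectroscopicVelocity x y + spectroscopicVelocity y z =
      2 * y * (x - z) / ((x + y) * (y + z)) := by
    unfold spectroscopicVelocity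
    field_simp
    ring
  have hone_add_mul : 1 + spectroscopicVelocity x y * spectroscopicVelocity y z =
      2 * y * (x + z) / ((x + y) * (y + z)) := by
    unfold spectroscopicVelocity
    field_simp
    ring
  rw [hsum, hone_add_mul, div_div_div_cancel_right₀ (mul_ne_zero hxy hyz),
    mul_div_mul_left _ _ (mul_ne_zero two_ne_zero hy), spectroscopicVelocity]

end spectroscopicVelocity

theorem spectroscopic_velocity_addition_negative_chi
    (A B C : ℝ) (hA : 0 < A) (hB : 0 < B) (hC : 0 < C)
    (v₁ v₂ v₃ : ℝ)
    (hv₁ : v₁ = -((B - A) / (A + B)))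
    (hv₂ : v₂ = (B - C) / (B + C))
    (hv₃ : v₃ = (A - C) / (A + C)) :
    v₃ = (v₁ + v₂) / (1 + v₁ * v₂) := by
  have hv₁ : v₁ = spectroscopicVelocity A B := by
    rw [hv₁, spectroscopicVelocity.swap B A, spectroscopicVelocity, add_comm B A]
  subst hv₁ hv₂ hv₃
  exact (spectroscopicVelocity.add hB.ne' (by positivity) (by positivity)).symm
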